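/- Let Γ₁, …, Γₙ (n ≥ 2) be connected simple graphs each with at least two vertices, and suppose some factor Γ_j has a nontrivial vertex stabiliser: there exist u ∈ V(Γ_j) and α ∈ Aut(Γ_j) with α ≠ id and α(u) = u. Then the automorphism group of Γ = ⋆ᵢ Γᵢ (with the permutation topology on V(Γ)) is non-discrete; equivalently, for every k the pointwise stabiliser in Aut(Γ) of the ball of radius k around the base vertex ∅ is nontrivial. -/

import Mathlib

variable {ι : Type} [DecidableEq ι]

abbrev Letter (V : ι → Type) := Σ i, V i

def upd {V : ι → Type} (u : ∀ i, V i) : List (Letter V) → ∀ i, V i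
  | [] => u
  | ⟨j, x⟩ :: w => Function.update (upd u w) j x

def Adm {V : ι → Type} (u : ∀ i, V i) (w : List (Letter V)) : Prop :=
  w.Chain' (fun a b => a.1 ≠ b.1) ∧
    ∀ (a : Letter V) (p : List (Letter V)), a :: p <:+ w → a.2 ≠ upd u p a.1

def Word {V : ι → Type} (u : ∀ i, V i) := {w : List (Letter V) // Adm u w}

def emptyWord {V : ι → Type} (u : ∀ i, V i) : Word u :=
  ⟨[], List.isChain_nil, by intro a p h; simp at h⟩

def Pre {V : ι → Type} (G : ∀ i, SimpleGraph (V i)) (u : ∀ i, V i)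
    (v w : List (Letter V)) : Prop :=
  (∃ (p : List (Letter V)) (j : ι) (a b : V j),
      (G j).Adj a b ∧ v = ⟨j, a⟩ :: p ∧ w = ⟨j, b⟩ :: p) ∨
  (∃ (j : ι) (a : V j), (G j).Adj (upd u v j) a ∧ w = ⟨j, a⟩ :: v)

def freeProd {V : ι → Type} (G : ∀ i, SimpleGraph (V i)) (u : ∀ i, V i) :
    SimpleGraph (Word u) :=
  SimpleGraph.fromRel fun v w => Pre G u v.1 w.1

/-!
Graph distance bounds word length, because an edge changes the length of a word by at most one
and the free product of connected graphs is connected (so the distance is not the junk value `0`).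
Hence the words having a fixed admissible suffix `q₀` of length `> k` all lie outside the ball of
radius `k`. If a family of factor automorphisms fixes every coordinate of `q₀`, applying it to all
letters above `q₀` preserves admissibility and adjacency, so it is an automorphism of the free
product that fixes the ball. Taking `α` on the `j`-th factor and the identity elsewhere, with
`q₀` long, ending in a letter of another factor and with `j`-coordinate `u'` (built by
alternating between two factors), this automorphism moves `⟨j, x⟩ :: q₀` whenever `α x ≠ x`.
-/

section

variable {V : ι → Type} {u : ∀ i, V i}

lemma adm_cons_iff {a : Letter V} {w : List (Letter V)} :
    Adm u (a :: w) ↔ Adm u w ∧ (∀ b ∈ w.head?, b.1 ≠ a.1) ∧ a.2 ≠ upd u w a.1 := by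
  constructor
  · rintro ⟨hc, hs⟩
    obtain ⟨hhead, hc⟩ := List.isChain_cons.1 hc
    exact ⟨⟨hc, fun b p h => hs b p (h.trans (List.suffix_cons a w))⟩,
      fun b hb => (hhead b hb).symm, hs a w (List.suffix_refl _)⟩
  · rintro ⟨⟨hc, hs⟩, hhead, hx⟩
    refine ⟨List.isChain_cons.2 ⟨fun b hb => (hhead b hb).symm, hc⟩, fun b p h => ?_⟩
    rcases List.suffix_cons_iff.1 h with h | h
    · obtain ⟨rfl, rfl⟩ := List.cons_eq_cons.1 h
      exact hx
    · exact hs b p h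

lemma exists_adm_cons_cons {i j : ι} (hij : i ≠ j) [Nontrivial (V i)] {w : List (Letter V)}
    (hw : Adm u w) (hhead : ∀ b ∈ w.head?, b.1 ≠ j) {x : V j} (hx : x ≠ upd u w j) :
    ∃ w', Adm u w' ∧ w.length + 2 = w'.length ∧ (∀ b ∈ w'.head?, b.1 ≠ j) ∧
      upd u w' j = x := by
  have hjx : Adm u (⟨j, x⟩ :: w) := adm_cons_iff.2 ⟨hw, hhead, hx⟩
  obtain ⟨y, hy⟩ := exists_ne (upd u (⟨j, x⟩ :: w) i)
  refine ⟨⟨i, y⟩ :: ⟨j, x⟩ :: w, adm_cons_iff.2 ⟨hjx, by simp [hij.symm], hy⟩, rfl,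
    by simp [hij], ?_⟩
  simp [upd, Function.update_of_ne hij.symm]

lemma exists_adm_length_ge {i j : ι} (hij : i ≠ j) [Nontrivial (V i)] [Nontrivial (V j)]
    (m : ℕ) (x : V j) :
    ∃ w, Adm u w ∧ m ≤ w.length ∧ (∀ b ∈ w.head?, b.1 ≠ j) ∧ upd u w j = x := by
  induction m generalizing x with
  | zero =>
    by_cases hx : u j = x
    · exact ⟨[], (emptyWord u).2, le_rfl, by simp, hx⟩
    · obtain ⟨w, hw, -, hhead, hupd⟩ :=
        exists_adm_cons_cons hij (w := []) (emptyWord u).2 (by simp) (Ne.symm hx)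
      exact ⟨w, hw, Nat.zero_le _, hhead, hupd⟩
  | succ m ih =>
    obtain ⟨x', hx'⟩ := exists_ne x
    obtain ⟨w, hw, hm, hhead, rfl⟩ := ih x'
    obtain ⟨w', hw', hlen, hhead', hupd'⟩ := exists_adm_cons_cons hij hw hhead hx'.symm
    exact ⟨w', hw', by omega, hhead', hupd'⟩

section Adjacency

variable (G : ∀ i, SimpleGraph (V i))

lemma Pre.ne {v w : List (Letter V)} (h : Pre G u v w) : v ≠ w := by
  rcases h with ⟨p, i, a, b, hab, rfl, rfl⟩ | ⟨i, a, -, rfl⟩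
  · simpa using hab.ne
  · exact (List.cons_ne_self _ _).symm

lemma freeProd_adj_iff {v w : Word u} :
    (freeProd G u).Adj v w ↔ Pre G u v.1 w.1 ∨ Pre G u w.1 v.1 := by
  rw [freeProd]
  refine (SimpleGraph.fromRel_adj _ v w).trans ⟨And.right, fun h => ⟨?_, h⟩⟩
  rintro rfl
  exact h.elim (Pre.ne G · rfl) (Pre.ne G · rfl)

lemma length_le_succ_of_adj {v w : Word u} (h : (freeProd G u).Adj v w) :
    w.1.length ≤ v.1.length + 1 := by
  rcases (freeProd_adj_iff G).1 h with
    (⟨p, i, a, b, -, hv, hw⟩ | ⟨i, a, -, hw⟩) | (⟨p, i, a, b, -, hw, hv⟩ | ⟨i, a, -, hv⟩) <;>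
    simp only [*, List.length_cons] <;> omega

lemma length_le_add_length_walk {v w : Word u} (p : (freeProd G u).Walk v w) :
    w.1.length ≤ v.1.length + p.length := by
  induction p with
  | nil => simp
  | cons h p ih =>
    have := length_le_succ_of_adj G h
    rw [SimpleGraph.Walk.length_cons]
    omega

open scoped Classical in
/-- The vertex `x` of the copy of `G i` through `l`, which meets `l` at its current
`i`-coordinate. -/
noncomputable def attach (u : ∀ i, V i) (l : List (Letter V)) (i : ι) (x : V i) : List (Letter V) :=
  if x = upd u l i then l else ⟨i, x⟩ :: l

lemma adm_attach {l : List (Letter V)} (hl : Adm u l) {i : ι} (hhead : ∀ b ∈ l.head?, b.1 ≠ i)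
    (x : V i) : Adm u (attach u l i x) := by
  unfold attach
  split_ifs with hx
  exacts [hl, adm_cons_iff.2 ⟨hl, hhead, hx⟩]

lemma pre_attach (l : List (Letter V)) {i : ι} {x y : V i} (h : (G i).Adj x y) :
    Pre G u (attach u l i x) (attach u l i y) ∨ Pre G u (attach u l i y) (attach u l i x) := by
  unfold attach
  split_ifs with hx hy hy
  · exact absurd (hx.trans hy.symm) h.ne
  · exact Or.inl (Or.inr ⟨i, y, hx ▸ h, rfl⟩)
  · exact Or.inr (Or.inr ⟨i, x, hy ▸ h.symm, rfl⟩)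
  · exact Or.inl (Or.inl ⟨l, i, x, y, h, rfl, rfl⟩)

noncomputable def factorHom (l : Word u) (i : ι) (hl : ∀ b ∈ l.1.head?, b.1 ≠ i) :
    G i →g freeProd G u where
  toFun x := ⟨attach u l.1 i x, adm_attach l.2 hl x⟩
  map_rel' h := (freeProd_adj_iff G).2 (pre_attach G l.1 h)

lemma reachable_emptyWord (hconn : ∀ i, (G i).Connected) (w : Word u) :
    (freeProd G u).Reachable (emptyWord u) w := by
  obtain ⟨l, hl⟩ := w
  induction l with
  | nil => rfl
  | cons a l ih =>
    obtain ⟨i, x⟩ := a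
    obtain ⟨hl', hhead, hx⟩ := adm_cons_iff.1 hl
    have hstep := ((hconn i).preconnected (upd u l i) x).map (factorHom G ⟨l, hl'⟩ i hhead)
    have hself : factorHom G ⟨l, hl'⟩ i hhead (upd u l i) = ⟨l, hl'⟩ := Subtype.ext (if_pos rfl)
    have hnew : factorHom G ⟨l, hl'⟩ i hhead x = ⟨⟨i, x⟩ :: l, hl⟩ := Subtype.ext (if_neg hx)
    rw [hself, hnew] at hstep
    exact (ih hl').trans hstep

lemma length_le_dist (hconn : ∀ i, (G i).Connected) (w : Word u) :
    w.1.length ≤ (freeProd G u).dist (emptyWord u) w := by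
  obtain ⟨p, hp⟩ := (reachable_emptyWord G hconn w).exists_walk_length_eq_dist
  calc w.1.length ≤ (emptyWord u).1.length + p.length := length_le_add_length_walk G p
    _ = _ := by rw [hp, emptyWord, List.length_nil, zero_add]

end Adjacency

section MapAbove

variable (q₀ : List (Letter V)) (f : ∀ i, V i → V i)

open scoped Classical in
noncomputable def mapAbove (w : List (Letter V)) : List (Letter V) :=
  if q₀ <:+ w then (w.take (w.length - q₀.length)).map (Sigma.map id f) ++ q₀ else w

lemma mapAbove_append (r : List (Letter V)) :
    mapAbove q₀ f (r ++ q₀) = r.map (Sigma.map id f) ++ q₀ := by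
  rw [mapAbove, if_pos (List.suffix_append r q₀), List.length_append, Nat.add_sub_cancel,
    List.take_left]

lemma mapAbove_of_not_suffix {w : List (Letter V)} (h : ¬ q₀ <:+ w) : mapAbove q₀ f w = w :=
  if_neg h

lemma mapAbove_cons {p : List (Letter V)} (h : q₀ <:+ p) (c : Letter V) :
    mapAbove q₀ f (c :: p) = Sigma.map id f c :: mapAbove q₀ f p := by
  obtain ⟨r, rfl⟩ := h
  rw [← List.cons_append, mapAbove_append, mapAbove_append, List.map_cons, List.cons_append]

lemma mapAbove_cons_of_not_suffix {p : List (Letter V)} (h : ¬ q₀ <:+ p) (c : Letter V) :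
    mapAbove q₀ f (c :: p) = c :: p := by
  by_cases hc : q₀ <:+ c :: p
  · obtain rfl : q₀ = c :: p := (List.suffix_cons_iff.1 hc).resolve_right h
    simpa using mapAbove_append (c :: p) f []
  · exact mapAbove_of_not_suffix q₀ f hc

lemma mapAbove_leftInverse {g : ∀ i, V i → V i} (h : ∀ i, Function.LeftInverse (g i) (f i)) :
    Function.LeftInverse (mapAbove q₀ g) (mapAbove q₀ f) := by
  intro w
  by_cases hw : q₀ <:+ w
  · obtain ⟨r, rfl⟩ := hw
    have hσ : Function.LeftInverse (Sigma.map id g) (Sigma.map id f) := fun ⟨i, x⟩ => by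
      simp [Sigma.map, h i x]
    rw [mapAbove_append, mapAbove_append, hσ.list_map]
  · rw [mapAbove_of_not_suffix q₀ f hw, mapAbove_of_not_suffix q₀ g hw]

variable {q₀ f}

lemma upd_map_append (hfix : ∀ i, f i (upd u q₀ i) = upd u q₀ i) (s : List (Letter V)) :
    upd u (s.map (Sigma.map id f) ++ q₀) = fun i => f i (upd u (s ++ q₀) i) := by
  induction s with
  | nil => exact funext fun i => (hfix i).symm
  | cons a s ih =>
    funext i
    simp only [List.map_cons, List.cons_append, Sigma.map, upd, ih, Function.apply_update]
    rfl

lemma adm_mapAbove (hinj : ∀ i, Function.Injective (f i))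
    (hfix : ∀ i, f i (upd u q₀ i) = upd u q₀ i) {w : List (Letter V)} (hw : Adm u w) :
    Adm u (mapAbove q₀ f w) := by
  by_cases h : q₀ <:+ w
  · obtain ⟨r, rfl⟩ := h
    rw [mapAbove_append]
    induction r with
    | nil => simpa using hw
    | cons a r ih =>
      rw [List.cons_append] at hw
      rw [List.map_cons, List.cons_append]
      obtain ⟨hr, hhead, ha⟩ := adm_cons_iff.1 hw
      refine adm_cons_iff.2 ⟨ih hr, ?_, ?_⟩
      · cases r <;> simpa [Sigma.map] using hhead
      · rw [upd_map_append hfix]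
        exact (hinj a.1).ne ha
  · rwa [mapAbove_of_not_suffix q₀ f h]

lemma pre_mapAbove (G : ∀ i, SimpleGraph (V i))
    (hadj : ∀ i a b, (G i).Adj a b → (G i).Adj (f i a) (f i b))
    (hfix : ∀ i, f i (upd u q₀ i) = upd u q₀ i) {v w : List (Letter V)} (h : Pre G u v w) :
    Pre G u (mapAbove q₀ f v) (mapAbove q₀ f w) := by
  rcases h with ⟨p, i, a, b, hab, rfl, rfl⟩ | ⟨i, a, ha, rfl⟩
  · by_cases hp : q₀ <:+ p
    · rw [mapAbove_cons q₀ f hp, mapAbove_cons q₀ f hp]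
      exact Or.inl ⟨_, i, f i a, f i b, hadj i a b hab, rfl, rfl⟩
    · rw [mapAbove_cons_of_not_suffix q₀ f hp, mapAbove_cons_of_not_suffix q₀ f hp]
      exact Or.inl ⟨p, i, a, b, hab, rfl, rfl⟩
  · by_cases hv : q₀ <:+ v
    · rw [mapAbove_cons q₀ f hv]
      obtain ⟨r, rfl⟩ := hv
      rw [mapAbove_append]
      refine Or.inr ⟨i, f i a, ?_, rfl⟩
      rw [upd_map_append hfix]
      exact hadj i _ _ ha
    · rw [mapAbove_of_not_suffix q₀ f hv, mapAbove_cons_of_not_suffix q₀ f hv]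
      exact Or.inr ⟨i, a, ha, rfl⟩

end MapAbove

section Twist

variable (G : ∀ i, SimpleGraph (V i)) (q₀ : List (Letter V))

noncomputable def mapAboveHom (f : ∀ i, G i ↪g G i)
    (hfix : ∀ i, f i (upd u q₀ i) = upd u q₀ i) : freeProd G u →g freeProd G u where
  toFun w := ⟨mapAbove q₀ (fun i => f i) w.1, adm_mapAbove (fun i => (f i).injective) hfix w.2⟩
  map_rel' h := (freeProd_adj_iff G).2 <|
    ((freeProd_adj_iff G).1 h).imp (pre_mapAbove G (fun i _ _ => (f i).map_adj_iff.2) hfix)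
      (pre_mapAbove G (fun i _ _ => (f i).map_adj_iff.2) hfix)

noncomputable def mapAboveIso (φ : ∀ i, G i ≃g G i)
    (hfix : ∀ i, φ i (upd u q₀ i) = upd u q₀ i) : freeProd G u ≃g freeProd G u :=
  have hfix' : ∀ i, (φ i).symm (upd u q₀ i) = upd u q₀ i := fun i =>
    (φ i).symm_apply_eq.2 (hfix i).symm
  have hinv : Function.LeftInverse (mapAboveHom G q₀ (fun i => (φ i).symm.toEmbedding) hfix')
      (mapAboveHom G q₀ (fun i => (φ i).toEmbedding) hfix) := fun w =>
    Subtype.ext (mapAbove_leftInverse q₀ _ (fun i => (φ i).symm_apply_apply) w.1)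
  have hinv' : Function.RightInverse
      (mapAboveHom G q₀ (fun i => (φ i).symm.toEmbedding) hfix')
      (mapAboveHom G q₀ (fun i => (φ i).toEmbedding) hfix) := fun w =>
    Subtype.ext (mapAbove_leftInverse q₀ _ (fun i => (φ i).apply_symm_apply) w.1)
  { toFun := mapAboveHom G q₀ (fun i => (φ i).toEmbedding) hfix
    invFun := mapAboveHom G q₀ (fun i => (φ i).symm.toEmbedding) hfix'
    left_inv := hinv
    right_inv := hinv'
    map_rel_iff' := fun {v w} => ⟨fun h => by
      convert (mapAboveHom G q₀ _ hfix').map_adj h <;> exact (hinv _).symm,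
      (mapAboveHom G q₀ _ hfix).map_adj⟩ }

lemma mapAboveIso_eq_self_of_dist_lt (hconn : ∀ i, (G i).Connected) (φ : ∀ i, G i ≃g G i)
    (hfix : ∀ i, φ i (upd u q₀ i) = upd u q₀ i) {w : Word u}
    (hw : (freeProd G u).dist (emptyWord u) w < q₀.length) : mapAboveIso G q₀ φ hfix w = w :=
  Subtype.ext <| mapAbove_of_not_suffix q₀ _ fun hs =>
    (hs.length_le.trans (length_le_dist G hconn w)).not_gt hw

end Twist

end

/-- If some factor of a free product of at least two connected graphs (each
with at least two vertices) has a nontrivial vertex stabiliser, then the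
automorphism group of the free product is non-discrete: for every `k` there
is a nontrivial automorphism fixing the ball of radius `k` around `∅`
pointwise. -/
theorem stmt17 {n : ℕ} (hn : 2 ≤ n) {V : Fin n → Type} (G : ∀ i, SimpleGraph (V i))
    (u : ∀ i, V i) (hconn : ∀ i, (G i).Connected) (hnt : ∀ i, Nontrivial (V i))
    (j : Fin n) (u' : V j) (α : G j ≃g G j) (hfix : α u' = u')
    (hα : ∃ x : V j, α x ≠ x) :
    ∀ k : ℕ, ∃ φ : freeProd G u ≃g freeProd G u,
      (∀ v : Word u, (freeProd G u).dist (emptyWord u) v ≤ k → φ v = v) ∧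
      ∃ w : Word u, φ w ≠ w := by
  intro k
  have : Nontrivial (Fin n) := Fin.nontrivial_iff_two_le.2 hn
  obtain ⟨i, hij⟩ := exists_ne j
  have := hnt i
  have := hnt j
  obtain ⟨q₀, hq₀, hlen, hhead, hupd⟩ := exists_adm_length_ge (u := u) hij (k + 1) u'
  let φ : ∀ i, G i ≃g G i := Function.update (fun i => RelIso.refl (G i).Adj) j α
  have hφ : ∀ i, φ i (upd u q₀ i) = upd u q₀ i := by
    intro i
    rcases eq_or_ne i j with rfl | hi
    · simp [φ, hupd, hfix]
    · simp [φ, hi]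
  obtain ⟨x, hx⟩ := hα
  have hxq₀ : x ≠ upd u q₀ j := hupd ▸ fun h => hx (h ▸ hfix)
  refine ⟨mapAboveIso G q₀ φ hφ, fun v hv => mapAboveIso_eq_self_of_dist_lt G q₀ hconn φ hφ
    (by omega), ⟨⟨j, x⟩ :: q₀, adm_cons_iff.2 ⟨hq₀, hhead, hxq₀⟩⟩, fun h => hx ?_⟩
  have hfixed : mapAbove q₀ (fun i => φ i) (⟨j, x⟩ :: q₀) = ⟨j, x⟩ :: q₀ :=
    congrArg Subtype.val h
  rw [mapAbove_cons q₀ _ List.suffix_rfl] at hfixed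
  simpa [φ, Sigma.map] using (List.cons_eq_cons.1 hfixed).1
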